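/- Let η : ℝ → ℝ be three times continuously differentiable with η'(x) > 0 for all x. Define g(x) = (η'(x))^{−1/2}, f(x) = η(x)·(η'(x))^{−1/2}, and u(x) = (1/2)·S(η)(x). Then f and g are twice differentiable solutions of Hill's equation y'' + u·y = 0 (i.e. f'' + u·f = 0 and g'' + u·g = 0 pointwise), and their Wronskian satisfies f(x)g'(x) − f'(x)g(x) = −1 for all x. (This reconstructs a pair of solutions of Hill's equation from the ratio η.) -/

import Mathlib

/-!
With `g = (η')^{-1/2}` we have `1/η' = g²` and `g' = -(η''/2)·g³`, so differentiating once more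
and comparing with the Schwarzian gives `g'' = -(1/2)·S(η)·g` directly. The second solution comes
from reduction of order: `η' = g⁻²` makes `f = η·g` satisfy `f' = η·g' + g⁻¹` and `f'' = η·g''`,
so `f` solves the same equation, and `f g' − f' g = −g·g⁻¹ = −1`.
-/

open Real

/-- The Schwarzian derivative `S(η) = η'''/η' − (3/2)·(η''/η')²`. -/
noncomputable def schwarzian (η : ℝ → ℝ) (x : ℝ) : ℝ :=
  iteratedDeriv 3 η x / deriv η x - (3 / 2) * (iteratedDeriv 2 η x / deriv η x) ^ 2

section ReductionOfOrder

variable {𝕜 : Type*} [NontriviallyNormedField 𝕜] {η g : 𝕜 → 𝕜} {x : 𝕜}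

theorem hasDerivAt_mul_of_hasDerivAt_inv_sq {g' : 𝕜} (hη : HasDerivAt η (g x ^ 2)⁻¹ x)
    (hg : HasDerivAt g g' x) (hg0 : g x ≠ 0) :
    HasDerivAt (fun y => η y * g y) (η x * g' + (g x)⁻¹) x := by
  refine (hη.mul hg).congr_deriv ?_
  field_simp
  ring

theorem hasDerivAt_mul_deriv_add_inv {g' : 𝕜 → 𝕜} {g'' : 𝕜} (hη : HasDerivAt η (g x ^ 2)⁻¹ x)
    (hg : HasDerivAt g (g' x) x) (hg' : HasDerivAt g' g'' x) (hg0 : g x ≠ 0) :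
    HasDerivAt (fun y => η y * g' y + (g y)⁻¹) (η x * g'') x := by
  refine ((hη.mul hg').add (hg.inv hg0)).congr_deriv ?_
  field_simp
  ring

end ReductionOfOrder

theorem iteratedDeriv_two_add_mul_eq_zero {𝕜 : Type*} [NontriviallyNormedField 𝕜]
    {y y' u : 𝕜 → 𝕜} (hy : ∀ x, HasDerivAt y (y' x) x)
    (hy' : ∀ x, HasDerivAt y' (-(u x * y x)) x) (x : 𝕜) :
    iteratedDeriv 2 y x + u x * y x = 0 := by
  rw [iteratedDeriv_succ, iteratedDeriv_one, funext fun x => (hy x).deriv, (hy' x).deriv]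
  ring

theorem ContDiff.hasDerivAt_iterate_deriv {𝕜 F : Type*} [NontriviallyNormedField 𝕜]
    [NormedAddCommGroup F] [NormedSpace 𝕜 F] {f : 𝕜 → F} {n : WithTop ℕ∞} {k : ℕ}
    (hf : ContDiff 𝕜 n f) (hk : k < n) (x : 𝕜) :
    HasDerivAt (deriv^[k] f) (deriv^[k + 1] f x) x := by
  rw [← iteratedDeriv_eq_iterate, ← iteratedDeriv_eq_iterate, iteratedDeriv_succ]
  exact (hf.differentiable_iteratedDeriv k hk x).hasDerivAt

theorem schwarzian_eq_iterate_deriv (η : ℝ → ℝ) (x : ℝ) : schwarzian η x =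
    deriv^[3] η x / deriv η x - 3 / 2 * (deriv^[2] η x / deriv η x) ^ 2 := by
  simp only [schwarzian, iteratedDeriv_eq_iterate]

theorem HasDerivAt.one_div_sqrt {p : ℝ → ℝ} {p' x : ℝ} (hp : HasDerivAt p p' x)
    (hpos : 0 < p x) : HasDerivAt (fun y => 1 / √(p y)) (-(p' / 2) * (1 / √(p x)) ^ 3) x := by
  have hs : 0 < √(p x) := sqrt_pos.2 hpos
  refine ((hasDerivAt_const x (1 : ℝ)).div (hp.sqrt hpos.ne') hs.ne').congr_deriv ?_
  rw [← sq_sqrt hpos.le]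
  field_simp
  ring

/-- With `q = p'` this is the second derivative of `1/√p` (see `HasDerivAt.one_div_sqrt`); for
`p, q, r = η', η'', η'''` its value is `-(1/2)·S(η)·(1/√p)`. -/
theorem HasDerivAt.neg_half_mul_one_div_sqrt_pow_three {p q : ℝ → ℝ} {r x : ℝ}
    (hp : HasDerivAt p (q x) x) (hq : HasDerivAt q r x) (hpos : 0 < p x) :
    HasDerivAt (fun y => -(q y / 2) * (1 / √(p y)) ^ 3)
      (-(1 / 2 * (r / p x - 3 / 2 * (q x / p x) ^ 2) * (1 / √(p x)))) x := by
  refine ((hq.div_const 2).fun_neg.mul ((hp.one_div_sqrt hpos).fun_pow 3)).congr_deriv ?_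
  have hps : p x = √(p x) ^ 2 := (sq_sqrt hpos.le).symm
  set s := √(p x)
  rw [hps]
  norm_num
  field_simp
  ring

/-- From a ratio `η` with `η' > 0` one reconstructs solutions
`g = (η')^{-1/2}` and `f = η·(η')^{-1/2}` of Hill's equation
`y'' + u·y = 0` with potential `u = (1/2)·S(η)`, with Wronskian
`f g' − f' g = −1`. -/
theorem hill_solutions_from_ratio
    (η : ℝ → ℝ) (hη : ContDiff ℝ 3 η) (hpos : ∀ x : ℝ, 0 < deriv η x) :
    (∀ x : ℝ, iteratedDeriv 2 (fun y => η y / Real.sqrt (deriv η y)) x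
        + (1 / 2) * schwarzian η x * (η x / Real.sqrt (deriv η x)) = 0) ∧
    (∀ x : ℝ, iteratedDeriv 2 (fun y => 1 / Real.sqrt (deriv η y)) x
        + (1 / 2) * schwarzian η x * (1 / Real.sqrt (deriv η x)) = 0) ∧
    (∀ x : ℝ, (η x / Real.sqrt (deriv η x))
          * deriv (fun y => 1 / Real.sqrt (deriv η y)) x
        - deriv (fun y => η y / Real.sqrt (deriv η y)) x
          * (1 / Real.sqrt (deriv η x)) = -1) := by
  have hd (k : ℕ) (hk : k < 3) := hη.hasDerivAt_iterate_deriv (by exact_mod_cast hk)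
  set g := fun y => 1 / √(deriv η y)
  set g' := fun y => -(deriv^[2] η y / 2) * g y ^ 3
  have hg0 (x : ℝ) : g x ≠ 0 := one_div_ne_zero (sqrt_pos.2 (hpos x)).ne'
  have hg (x : ℝ) : HasDerivAt g (g' x) x := (hd 1 (by norm_num) x).one_div_sqrt (hpos x)
  have hg' (x : ℝ) : HasDerivAt g' (-(1 / 2 * schwarzian η x * g x)) x := by
    rw [schwarzian_eq_iterate_deriv]
    exact (hd 1 (by norm_num) x).neg_half_mul_one_div_sqrt_pow_three (hd 2 (by norm_num) x)
      (hpos x)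
  have hη' (x : ℝ) : HasDerivAt η (g x ^ 2)⁻¹ x := by
    simpa [g, sq_sqrt (hpos x).le] using hd 0 (by norm_num) x
  have hf_eq (y : ℝ) : η y / √(deriv η y) = η y * g y := div_eq_mul_one_div _ _
  have hf (x : ℝ) := hasDerivAt_mul_of_hasDerivAt_inv_sq (hη' x) (hg x) (hg0 x)
  have hf' (x : ℝ) := hasDerivAt_mul_deriv_add_inv (hη' x) (hg x) (hg' x) (hg0 x)
  simp only [hf_eq]
  refine ⟨iteratedDeriv_two_add_mul_eq_zero (u := fun x => 1 / 2 * schwarzian η x) hf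
    fun x => (hf' x).congr_deriv (by ring), iteratedDeriv_two_add_mul_eq_zero hg hg', fun x => ?_⟩
  rw [(hg x).deriv, (hf x).deriv]
  field_simp [hg0 x]
  ring
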